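/- Let U, V be neighborhoods of 0 in C and F : U → V a C^1 diffeomorphism with F(0) = 0 whose derivative at 0 is an invertible C-linear map T. If B ⊆ U is closed and F(B) is asymptotically ρ-self-similar about 0 with limit model A, then B is asymptotically ρ-self-similar about 0 with limit model T^{-1}(A). -/

import Mathlib

open Pointwise

/-- Truncation: X_r = (X ∩ D_r) ∪ ∂D_r. -/
noncomputable def trunc (r : ℝ) (X : Set ℂ) : Set ℂ :=
  (X ∩ Metric.closedBall 0 r) ∪ Metric.sphere (0 : ℂ) r

/-- B is asymptotically ρ-self-similar about 0 with limit model A. -/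
def AsympSelfSimilar (ρ : ℂ) (A B : Set ℂ) : Prop :=
  ∃ r > 0, Filter.Tendsto
    (fun n : ℕ => Metric.hausdorffDist (trunc r ((ρ ^ n) • B)) (trunc r A))
    Filter.atTop (nhds 0)

/-!
Put `G = T⁻¹ F`. Scaling by `T⁻¹` turns the hypothesis into asymptotic self-similarity of
`G(B) = T⁻¹ F(B)` with model `T⁻¹ A`, so it suffices that the truncations of `ρⁿ B` and `ρⁿ G(B)`
at any radius `r` become Hausdorff-close. Now `G` is tangent to the identity, `G b - b = o(b)`, and
by the inverse function theorem and injectivity on `U`, `G b` small forces `b` small. So whenever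
`ρⁿ b` or `ρⁿ G b` lies in the disc of radius `r`, `|b| = O(r / |ρ|ⁿ)` and
`|ρⁿ b - ρⁿ G b| = |ρ|ⁿ o(|b|) → 0` uniformly in `b ∈ B`.
-/

open Filter Metric Set Topology

theorem Metric.hausdorffEDist_smul₀ {𝕜 E : Type*} [NormedDivisionRing 𝕜] [SeminormedAddCommGroup E]
    [Module 𝕜 E] [NormSMulClass 𝕜 E] {c : 𝕜} (hc : c ≠ 0) (s t : Set E) :
    hausdorffEDist (c • s) (c • t) = ‖c‖₊ • hausdorffEDist s t := by
  have hs : c • s = (c • ·) '' s := (image_smul).symm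
  have ht : c • t = (c • ·) '' t := (image_smul).symm
  rw [hausdorffEDist_def, hausdorffEDist_def]
  conv_lhs => rw [hs, iSup_image, ← hs, ht, iSup_image, ← ht]
  simp only [infEDist_smul₀ hc, ENNReal.smul_def, smul_eq_mul, ENNReal.mul_iSup, mul_max]

theorem Metric.hausdorffDist_smul₀ {𝕜 E : Type*} [NormedDivisionRing 𝕜] [SeminormedAddCommGroup E]
    [Module 𝕜 E] [NormSMulClass 𝕜 E] {c : 𝕜} (hc : c ≠ 0) (s t : Set E) :
    hausdorffDist (c • s) (c • t) = ‖c‖ * hausdorffDist s t := by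
  simp only [hausdorffDist, hausdorffEDist_smul₀ hc, ENNReal.toReal_smul, NNReal.smul_def,
    coe_nnnorm, smul_eq_mul]

lemma trunc_nonempty {r : ℝ} (hr : 0 ≤ r) (X : Set ℂ) : (trunc r X).Nonempty :=
  ⟨r, Or.inr (by simp [abs_of_nonneg hr])⟩

lemma trunc_subset_closedBall (r : ℝ) (X : Set ℂ) : trunc r X ⊆ closedBall 0 r :=
  union_subset inter_subset_right sphere_subset_closedBall

lemma hausdorffEDist_trunc_ne_top {r : ℝ} (hr : 0 ≤ r) (X Y : Set ℂ) :
    hausdorffEDist (trunc r X) (trunc r Y) ≠ ⊤ :=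
  hausdorffEDist_ne_top_of_nonempty_of_bounded (trunc_nonempty hr X) (trunc_nonempty hr Y)
    (isBounded_closedBall.subset (trunc_subset_closedBall r X))
    (isBounded_closedBall.subset (trunc_subset_closedBall r Y))

lemma trunc_smul {c : ℂ} (hc : c ≠ 0) {r : ℝ} (hr : 0 ≤ r) (X : Set ℂ) :
    trunc (‖c‖ * r) (c • X) = c • trunc r X := by
  rw [trunc, trunc, smul_set_union, smul_set_inter₀ hc, smul_closedBall c _ hr, smul_sphere c _ hr,
    smul_zero]

lemma exists_mem_trunc_dist_le {r ε : ℝ} (hr : 0 ≤ r) {X : Set ℂ} {x y : ℂ}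
    (hx : ‖x‖ ≤ r) (hy : y ∈ X) (hxy : dist x y ≤ ε) :
    ∃ z ∈ trunc r X, dist x z ≤ 2 * ε := by
  rcases le_or_gt ‖y‖ r with hyr | hyr
  · exact ⟨y, Or.inl ⟨hy, mem_closedBall_zero_iff.2 hyr⟩,
      by linarith [dist_nonneg (x := x) (y := y)]⟩
  have hy0 : 0 < ‖y‖ := hr.trans_lt hyr
  -- radial projection of `y` onto the sphere, which moves `y` by `‖y‖ - r ≤ ‖y‖ - ‖x‖ ≤ dist x y`
  set z : ℂ := (r / ‖y‖ : ℝ) • y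
  have hz : ‖z‖ = r := by
    rw [norm_smul, Real.norm_of_nonneg (by positivity), div_mul_cancel₀ _ hy0.ne']
  have hyz : dist y z = ‖y‖ - r := by
    have hsub : y - z = (1 - r / ‖y‖ : ℝ) • y := by rw [sub_smul, one_smul]
    rw [dist_eq_norm, hsub, norm_smul,
      Real.norm_of_nonneg (sub_nonneg.2 ((div_le_one hy0).2 hyr.le)), sub_mul, one_mul,
      div_mul_cancel₀ _ hy0.ne']
  refine ⟨z, Or.inr (mem_sphere_zero_iff_norm.2 hz), ?_⟩
  linarith [dist_triangle x y z, norm_sub_norm_le y x, dist_eq_norm x y, norm_sub_rev x y]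

lemma hausdorffDist_trunc_le {r ε : ℝ} (hr : 0 ≤ r) (hε : 0 ≤ ε) {X Y : Set ℂ}
    (hXY : ∀ x ∈ X, ‖x‖ ≤ r → ∃ y ∈ Y, dist x y ≤ ε)
    (hYX : ∀ y ∈ Y, ‖y‖ ≤ r → ∃ x ∈ X, dist y x ≤ ε) :
    hausdorffDist (trunc r X) (trunc r Y) ≤ 2 * ε := by
  have hsphere : ∀ z ∈ sphere (0 : ℂ) r, ∀ Z : Set ℂ, ∃ w ∈ trunc r Z, dist z w ≤ 2 * ε :=
    fun z hz Z => ⟨z, Or.inr hz, by rw [dist_self]; positivity⟩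
  apply hausdorffDist_le_of_mem_dist (by positivity)
  · rintro x (⟨hx, hxr⟩ | hx)
    · have hxr : ‖x‖ ≤ r := mem_closedBall_zero_iff.1 hxr
      obtain ⟨y, hy, hxy⟩ := hXY x hx hxr
      exact exists_mem_trunc_dist_le hr hxr hy hxy
    · exact hsphere x hx Y
  · rintro y (⟨hy, hyr⟩ | hy)
    · have hyr : ‖y‖ ≤ r := mem_closedBall_zero_iff.1 hyr
      obtain ⟨x, hx, hyx⟩ := hYX y hy hyr
      exact exists_mem_trunc_dist_le hr hyr hx hyx
    · exact hsphere y hy X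

namespace AsympSelfSimilar

variable {ρ : ℂ} {A X : Set ℂ}

lemma smul (h : AsympSelfSimilar ρ A X) {c : ℂ} (hc : c ≠ 0) :
    AsympSelfSimilar ρ (c • A) (c • X) := by
  obtain ⟨r, hr, hlim⟩ := h
  refine ⟨‖c‖ * r, by positivity, ?_⟩
  simpa only [smul_comm _ c X, trunc_smul hc hr.le, hausdorffDist_smul₀ hc, mul_zero] using
    hlim.const_mul ‖c‖

lemma of_tendsto_hausdorffDist_trunc (h : AsympSelfSimilar ρ A X) {Y : Set ℂ}
    (hYX : ∀ r > 0, Tendsto (fun n : ℕ => hausdorffDist (trunc r (ρ ^ n • Y)) (trunc r (ρ ^ n • X)))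
      atTop (𝓝 0)) :
    AsympSelfSimilar ρ A Y := by
  obtain ⟨r, hr, hlim⟩ := h
  refine ⟨r, hr, squeeze_zero (fun n => hausdorffDist_nonneg) (fun n => hausdorffDist_triangle
    (t := trunc r (ρ ^ n • X)) (hausdorffEDist_trunc_ne_top hr.le _ _)) ?_⟩
  simpa using (hYX r hr).add hlim

end AsympSelfSimilar

lemma eventually_mul_norm_sub_le {E : Type*} [SeminormedAddCommGroup E] {G : E → E} {B : Set E}
    (hG : (fun b => G b - b) =o[𝓝 0] fun b => b) (hloc : comap G (𝓝 0) ⊓ 𝓟 B ≤ 𝓝 0)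
    {r ε : ℝ} (hr : 0 < r) (hε : 0 < ε) :
    ∀ᶠ l : ℝ in atTop, ∀ b ∈ B, (l * ‖b‖ ≤ r ∨ l * ‖G b‖ ≤ r) → l * ‖G b - b‖ ≤ ε := by
  set δ := min (1 / 2) (ε / (2 * r))
  have hP : ∀ᶠ b in 𝓝 0, ‖G b - b‖ ≤ δ * ‖b‖ := hG.def (by positivity)
  obtain ⟨η, hη, hηP⟩ := Metric.eventually_nhds_iff.1 hP
  obtain ⟨t, ht, htP⟩ := ((nhds_basis_ball.comap G).mem_iff).1 (mem_inf_principal.1 (hloc hP))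
  filter_upwards [eventually_gt_atTop (r / η), eventually_gt_atTop (r / t),
    eventually_gt_atTop 0] with l hlη hlt hl b hb hsmall
  rw [div_lt_iff₀ hη] at hlη
  rw [div_lt_iff₀ ht] at hlt
  have hPb : ‖G b - b‖ ≤ δ * ‖b‖ := by
    rcases hsmall with h | h
    · exact hηP (by rw [dist_zero_right]; nlinarith)
    · exact htP (by rw [mem_preimage, mem_ball_zero_iff]; nlinarith) hb
  have hδ : δ ≤ 1 / 2 := min_le_left _ _
  -- in the second case `‖b‖ ≤ ‖G b‖ + ‖G b - b‖ ≤ ‖G b‖ + ‖b‖ / 2`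
  have hlb : l * ‖b‖ ≤ 2 * r := by
    rcases hsmall with h | h
    · linarith
    · nlinarith [norm_sub_norm_le b (G b), norm_sub_rev (G b) b]
  calc l * ‖G b - b‖ ≤ δ * (l * ‖b‖) := by nlinarith
    _ ≤ ε / (2 * r) * (2 * r) := by gcongr; exact min_le_right _ _
    _ = ε := div_mul_cancel₀ _ (by positivity)

lemma tendsto_hausdorffDist_trunc_pow_smul_image {G : ℂ → ℂ} {B : Set ℂ}
    (hG : (fun b => G b - b) =o[𝓝 0] fun b => b) (hloc : comap G (𝓝 0) ⊓ 𝓟 B ≤ 𝓝 0)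
    {ρ : ℂ} (hρ : 1 < ‖ρ‖) {r : ℝ} (hr : 0 < r) :
    Tendsto (fun n : ℕ => hausdorffDist (trunc r (ρ ^ n • B)) (trunc r (ρ ^ n • G '' B)))
      atTop (𝓝 0) := by
  refine tendsto_order.2 ⟨fun a ha => .of_forall fun n => ha.trans_le hausdorffDist_nonneg,
    fun ε hε => ?_⟩
  filter_upwards [(tendsto_pow_atTop_atTop_of_one_lt hρ).eventually
    (eventually_mul_norm_sub_le hG hloc hr (ε := ε / 4) (by positivity))] with n hn
  have hnorm (z : ℂ) : ‖ρ ^ n • z‖ = ‖ρ‖ ^ n * ‖z‖ := by rw [norm_smul, norm_pow]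
  have hdist (b : ℂ) : dist (ρ ^ n • b) (ρ ^ n • G b) = ‖ρ‖ ^ n * ‖G b - b‖ := by
    rw [dist_smul₀, norm_pow, dist_eq_norm, norm_sub_rev]
  refine (hausdorffDist_trunc_le (ε := ε / 4) hr.le (by positivity) ?_ ?_).trans_lt (by linarith)
  · rintro _ ⟨b, hb, rfl⟩ hbr
    exact ⟨ρ ^ n • G b, smul_mem_smul_set (mem_image_of_mem G hb),
      (hdist b).trans_le (hn b hb (.inl ((hnorm b).symm.trans_le hbr)))⟩
  · rintro _ ⟨_, ⟨b, hb, rfl⟩, rfl⟩ hbr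
    exact ⟨ρ ^ n • b, smul_mem_smul_set hb, (dist_comm _ _).trans_le <|
      (hdist b).trans_le (hn b hb (.inr ((hnorm (G b)).symm.trans_le hbr)))⟩

theorem ContDiffAt.hasStrictFDerivAt_of_restrictScalars {E F : Type*} [NormedAddCommGroup E]
    [NormedSpace ℂ E] [NormedAddCommGroup F] [NormedSpace ℂ F] {f : E → F} {f' : E →L[ℂ] F}
    {x : E} {n : WithTop ℕ∞} (hf : ContDiffAt ℝ n f x) (hn : n ≠ 0) (hf' : HasFDerivAt f f' x) :
    HasStrictFDerivAt f f' x :=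
  .of_isLittleO (hf.hasStrictFDerivAt' (hf'.restrictScalars ℝ) hn).isLittleO

theorem comap_nhds_inf_principal_le_nhds {X Y : Type*} [TopologicalSpace X] [TopologicalSpace Y]
    {f : X → Y} {a : X} {U : Set X} (hU : U ∈ 𝓝 a) (hinj : InjOn f U)
    (hopen : 𝓝 (f a) ≤ map f (𝓝 a)) : comap f (𝓝 (f a)) ⊓ 𝓟 U ≤ 𝓝 a := by
  intro s hs
  have himage : f '' (s ∩ U) ∈ 𝓝 (f a) :=
    hopen (mem_map.2 (mem_of_superset (inter_mem hs hU) (subset_preimage_image f _)))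
  refine mem_inf_of_inter (preimage_mem_comap himage) (mem_principal_self U) ?_
  rintro b ⟨⟨c, hc, hcb⟩, hb⟩
  exact hinj hc.2 hb hcb ▸ hc.1

theorem asymp_self_similar_pullback_general (U : Set ℂ)
    (hU : U ∈ nhds (0 : ℂ))
    (F : ℂ → ℂ) (hF : ContDiffOn ℝ 1 F U) (hinj : Set.InjOn F U)
    (hF0 : F 0 = 0)
    (T : ℂ) (hT : T ≠ 0) (hderiv : HasDerivAt F T 0)
    (ρ : ℂ) (hρ : 1 < ‖ρ‖)
    (B : Set ℂ) (hBU : B ⊆ U)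
    (A : Set ℂ) (hFB : AsympSelfSimilar ρ A (F '' B)) :
    AsympSelfSimilar ρ (T⁻¹ • A) B := by
  set G : ℂ → ℂ := fun z => T⁻¹ * F z
  have hG0 : G 0 = 0 := by simp [G, hF0]
  have hFstrict : HasStrictDerivAt F T 0 :=
    (hF.contDiffAt hU).hasStrictFDerivAt_of_restrictScalars one_ne_zero hderiv
  have hGstrict : HasStrictDerivAt G 1 0 := by
    simpa [inv_mul_cancel₀ hT] using hFstrict.const_mul T⁻¹
  have hGo : (fun b => G b - b) =o[𝓝 0] fun b => b := by
    simpa [hG0] using hasDerivAt_iff_isLittleO_nhds_zero.1 hGstrict.hasDerivAt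
  have hloc : comap G (𝓝 0) ⊓ 𝓟 B ≤ 𝓝 0 := by
    have hGinj : InjOn G U := fun x hx y hy h => hinj hx hy (mul_left_cancel₀ (inv_ne_zero hT) h)
    simpa [hG0] using (inf_le_inf_left _ (principal_mono.2 hBU)).trans <|
      comap_nhds_inf_principal_le_nhds hU hGinj (hGstrict.map_nhds_eq one_ne_zero).ge
  have hGB : T⁻¹ • F '' B = G '' B := by rw [← image_smul, image_image]; rfl
  exact (hGB ▸ hFB.smul (inv_ne_zero hT)).of_tendsto_hausdorffDist_trunc fun r hr =>
    tendsto_hausdorffDist_trunc_pow_smul_image hGo hloc hρ hr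

/-- Tan Lei's Lemma: if F is a C¹ diffeomorphism fixing 0 with ℂ-linear
derivative T at 0, and F(B) is asymptotically ρ-self-similar about 0 with
limit model A, then B is asymptotically ρ-self-similar about 0 with limit
model T⁻¹(A). -/
theorem asymp_self_similar_pullback (U V : Set ℂ)
    (hU : U ∈ nhds (0 : ℂ)) (hV : V ∈ nhds (0 : ℂ))
    (F : ℂ → ℂ) (hF : ContDiffOn ℝ 1 F U) (hinj : Set.InjOn F U)
    (himg : F '' U = V) (hF0 : F 0 = 0)
    (T : ℂ) (hT : T ≠ 0) (hderiv : HasDerivAt F T 0)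
    (ρ : ℂ) (hρ : 1 < ‖ρ‖)
    (B : Set ℂ) (hB : IsClosed B) (hBU : B ⊆ U)
    (A : Set ℂ) (hFB : AsympSelfSimilar ρ A (F '' B)) :
    AsympSelfSimilar ρ (T⁻¹ • A) B :=
  asymp_self_similar_pullback_general U hU F hF hinj hF0 T hT hderiv ρ hρ B hBU A hFB
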